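/- Let p ≥ 1 be an integer, M a Hermitian s×s complex matrix with ‖M‖_∞ ≤ 1, and q ∈ ℝ[x]. Then tr(q(M)) − sup_{x∈[−1,1]} max(q(x) − f_p(x), 0) ≤ d_p(M)^p ≤ tr(q(M)) + sup_{x∈[−1,1]} max(f_p(x) − q(x), 0). -/

import Mathlib

open scoped ComplexOrder

noncomputable section

/-- The negative part function `f_p` for a natural exponent `p`:
`f_p(x) = |x|^p` for `x < 0` and `0` otherwise. -/
def negPart (p : ℕ) (x : ℝ) : ℝ := if x < 0 then |x| ^ p else 0

/-- The normalized trace of `f(M)` for a Hermitian matrix `M`, defined spectrally: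
`tr(f(M)) = s⁻¹ ∑ᵢ f(λᵢ)`. -/
def trFun {s : ℕ} {M : Matrix (Fin s) (Fin s) ℂ} (hM : M.IsHermitian)
    (f : ℝ → ℝ) : ℝ := (s : ℝ)⁻¹ * ∑ i, f (hM.eigenvalues i)

/-- The normalized Schatten p-norm of a Hermitian matrix:
`‖M‖_p = (s⁻¹ ∑ᵢ |λᵢ|^p)^(1/p)`. -/
def schattenNorm {s : ℕ} (p : ℝ) {M : Matrix (Fin s) (Fin s) ℂ}
    (hM : M.IsHermitian) : ℝ :=
  ((s : ℝ)⁻¹ * ∑ i, |hM.eigenvalues i| ^ p) ^ (1 / p)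

/-- The distance of a Hermitian matrix to the psd cone in normalized Schatten p-norm. -/
def distPSD {s : ℕ} (p : ℝ) {M : Matrix (Fin s) (Fin s) ℂ}
    (hM : M.IsHermitian) : ℝ :=
  sInf { r : ℝ | ∃ (N : Matrix (Fin s) (Fin s) ℂ) (hN : N.PosSemidef),
    r = schattenNorm p (hM.sub hN.isHermitian) }

/-! For psd `N`, the diagonal of `M - N` in an eigenbasis of `M` lies entrywise below the
eigenvalues of `M`, and by Schur it is a doubly stochastic average of the eigenvalues of
`M - N`. Since `f_p` is convex and decreasing this gives
`∑ f_p(λ(M)) ≤ ∑ f_p(λ(M - N)) ≤ ∑ |λ(M - N)|^p`, with equality for `N = M₊`; hence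
`d_p(M)^p = tr(f_p(M))`. Both bounds then follow by comparing `q` with `f_p` on `[-1, 1]`,
which contains the spectrum of `M`. -/

namespace Matrix

variable {n : Type*} [Fintype n] [DecidableEq n] {𝕜 : Type*} [RCLike 𝕜]

lemma sum_comp_mulVec_le_of_mem_doublyStochastic {P : Matrix n n ℝ}
    (hP : P ∈ doublyStochastic ℝ n) {s : Set ℝ} {g : ℝ → ℝ} (hg : ConvexOn ℝ s g)
    {x : n → ℝ} (hx : ∀ i, x i ∈ s) :
    ∑ i, g ((P *ᵥ x) i) ≤ ∑ i, g (x i) := by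
  rw [mem_doublyStochastic_iff_sum] at hP
  obtain ⟨hP₀, hrow, hcol⟩ := hP
  calc ∑ i, g ((P *ᵥ x) i) ≤ ∑ i, ∑ j, P i j * g (x j) := by
        refine Finset.sum_le_sum fun i _ => ?_
        simpa [mulVec, dotProduct] using
          hg.map_sum_le (fun j _ => hP₀ i j) (hrow i) (fun j _ => hx j)
    _ = ∑ j, g (x j) := by
        rw [Finset.sum_comm]
        simp_rw [← Finset.sum_mul, hcol, one_mul]

lemma of_norm_sq_mem_doublyStochastic {U : Matrix n n 𝕜} (hU : U ∈ unitaryGroup n 𝕜) :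
    of (fun i j => ‖U i j‖ ^ 2) ∈ doublyStochastic ℝ n := by
  have key (V : Matrix n n 𝕜) (i : n) :
      ((∑ j, ‖V i j‖ ^ 2 : ℝ) : 𝕜) = (V * star V) i i := by
    simp [mul_apply, RCLike.mul_conj]
  refine mem_doublyStochastic_iff_sum.mpr
    ⟨fun i j => by rw [of_apply]; positivity, fun i => ?_, fun j => ?_⟩
  · have := key U i
    rw [mem_unitaryGroup_iff.mp hU, one_apply_eq] at this
    exact_mod_cast this
  · have := key (star U) j
    rw [star_star, mem_unitaryGroup_iff'.mp hU, one_apply_eq] at this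
    simpa using (by exact_mod_cast this : ∑ i, ‖(star U) j i‖ ^ 2 = (1:ℝ))

lemma mul_diagonal_mul_star_apply_self (V : Matrix n n 𝕜) (d : n → ℝ) (i : n) :
    (V * diagonal (RCLike.ofReal ∘ d) * star V : Matrix n n 𝕜) i i =
      ((∑ j, ‖V i j‖ ^ 2 * d j : ℝ) : 𝕜) := by
  rw [mul_apply, RCLike.ofReal_sum]
  simp only [mul_diagonal, star_apply, RCLike.star_def, RCLike.ofReal_mul, RCLike.ofReal_pow,
    Function.comp_apply]
  refine Finset.sum_congr rfl fun j _ => ?_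
  rw [← RCLike.mul_conj]
  ring

/-- Schur: the diagonal of `star U * A * U` is `P *ᵥ λ(A)` with `P` doubly stochastic,
`P i j = ‖(star U * V) i j‖²` for an eigenbasis `V` of `A`. -/
theorem IsHermitian.sum_convexOn_re_diag_le {A : Matrix n n 𝕜} (hA : A.IsHermitian)
    {U : Matrix n n 𝕜} (hU : U ∈ unitaryGroup n 𝕜) {g : ℝ → ℝ}
    (hg : ConvexOn ℝ Set.univ g) :
    ∑ i, g (RCLike.re ((star U * A * U) i i)) ≤ ∑ i, g (hA.eigenvalues i) := by
  set V : Matrix n n 𝕜 := star U * (hA.eigenvectorUnitary : Matrix n n 𝕜)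
  have hV : V ∈ unitaryGroup n 𝕜 := mul_mem (Unitary.star_mem hU) hA.eigenvectorUnitary.2
  have hconj : star U * A * U = V * diagonal (RCLike.ofReal ∘ hA.eigenvalues) * star V := by
    conv_lhs => rw [hA.spectral_theorem, Unitary.conjStarAlgAut_apply]
    simp [V, star_mul, Matrix.mul_assoc]
  have hdiag (i : n) : RCLike.re ((star U * A * U) i i) =
      (of (fun i j => ‖V i j‖ ^ 2) *ᵥ hA.eigenvalues) i := by
    rw [hconj, mul_diagonal_mul_star_apply_self, RCLike.ofReal_re]
    simp [mulVec, dotProduct]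
  simp_rw [hdiag]
  exact sum_comp_mulVec_le_of_mem_doublyStochastic (of_norm_sq_mem_doublyStochastic hV) hg
    fun _ => Set.mem_univ _

theorem IsHermitian.sum_eigenvalues_le_of_sub_posSemidef {A B : Matrix n n 𝕜}
    (hA : A.IsHermitian) (hB : B.IsHermitian) (hAB : (B - A).PosSemidef) {g : ℝ → ℝ}
    (hg : ConvexOn ℝ Set.univ g) (hg' : Antitone g) :
    ∑ i, g (hB.eigenvalues i) ≤ ∑ i, g (hA.eigenvalues i) := by
  set U : Matrix n n 𝕜 := (hB.eigenvectorUnitary : Matrix n n 𝕜)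
  have hdiagB : star U * B * U = diagonal (RCLike.ofReal ∘ hB.eigenvalues) := by
    simpa using hB.conjStarAlgAut_star_eigenvectorUnitary
  have hle (i : n) : RCLike.re ((star U * A * U) i i) ≤ hB.eigenvalues i := by
    have h := (hAB.conjTranspose_mul_mul_same U).diag_nonneg (i := i)
    rw [← star_eq_conjTranspose, Matrix.mul_sub, Matrix.sub_mul, sub_apply, hdiagB,
      diagonal_apply_eq] at h
    simpa using (RCLike.nonneg_iff.mp h).1
  calc ∑ i, g (hB.eigenvalues i) ≤ ∑ i, g (RCLike.re ((star U * A * U) i i)) :=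
        Finset.sum_le_sum fun i _ => hg' (hle i)
    _ ≤ ∑ i, g (hA.eigenvalues i) := hA.sum_convexOn_re_diag_le hB.eigenvectorUnitary.2 hg

theorem IsHermitian.sum_eigenvalues_of_eq_cfc {A B : Matrix n n 𝕜} (hA : A.IsHermitian)
    (hB : B.IsHermitian) {f : ℝ → ℝ} (hBA : B = cfc f A) (g : ℝ → ℝ) :
    ∑ i, g (hB.eigenvalues i) = ∑ i, g (f (hA.eigenvalues i)) := by
  -- the eigenvalues of `cfc f A` are `f ∘ λ(A)` only up to a permutation, read off the charpoly
  have hchar : B.charpoly = ∏ i, (Polynomial.X - Polynomial.C (f (hA.eigenvalues i) : 𝕜)) := by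
    rw [hBA, hA.charpoly_cfc_eq]
  have hmap : Finset.univ.val.map hB.eigenvalues =
      Finset.univ.val.map fun i => f (hA.eigenvalues i) := by
    have hroots := congrArg (Multiset.map RCLike.re) hB.roots_charpoly_eq_eigenvalues
    rw [hchar, Polynomial.roots_prod _ _ (by simp [Finset.prod_ne_zero_iff,
      Polynomial.X_sub_C_ne_zero])] at hroots
    simpa [Multiset.map_map, Function.comp_def] using hroots.symm
  simpa only [Finset.sum_eq_multiset_sum, Multiset.map_map, Function.comp_def] using
    congrArg (fun m => (m.map g).sum) hmap

end Matrix

open Matrix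

lemma negPart_eq_max_neg_pow {p : ℕ} (hp : p ≠ 0) (x : ℝ) :
    _root_.negPart p x = max (-x) 0 ^ p := by
  rw [_root_.negPart]
  split_ifs with h
  · rw [abs_of_neg h, max_eq_left (by linarith)]
  · rw [max_eq_right (by linarith), zero_pow hp]

lemma negPart_le_abs_pow (p : ℕ) (x : ℝ) : _root_.negPart p x ≤ |x| ^ p := by
  rw [_root_.negPart]
  split_ifs
  exacts [le_rfl, by positivity]

lemma convexOn_negPart {p : ℕ} (hp : p ≠ 0) : ConvexOn ℝ Set.univ (_root_.negPart p) := by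
  have hmax : ConvexOn ℝ Set.univ fun x : ℝ => max (-x) 0 :=
    (concaveOn_id convex_univ).neg.sup (convexOn_const 0 convex_univ)
  rw [show _root_.negPart p = (fun x : ℝ => max (-x) 0) ^ p from
    funext (negPart_eq_max_neg_pow hp)]
  exact hmax.pow (fun x _ => le_max_right _ _) p

lemma antitone_negPart {p : ℕ} (hp : p ≠ 0) : Antitone (_root_.negPart p) := fun x y hxy => by
  rw [negPart_eq_max_neg_pow hp, negPart_eq_max_neg_pow hp]
  exact pow_le_pow_left₀ (le_max_right _ _) (max_le_max (neg_le_neg hxy) le_rfl) p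

lemma continuous_negPart_of_ne_zero {p : ℕ} (hp : p ≠ 0) : Continuous (_root_.negPart p) := by
  rw [show _root_.negPart p = (fun x : ℝ => max (-x) 0 ^ p) from
    funext (negPart_eq_max_neg_pow hp)]
  fun_prop

section NormalizedTrace

variable {s : ℕ} {M : Matrix (Fin s) (Fin s) ℂ} (hM : M.IsHermitian)

lemma trFun_sub (f g : ℝ → ℝ) :
    trFun hM (fun x => f x - g x) = trFun hM f - trFun hM g := by
  simp only [trFun, Finset.sum_sub_distrib, mul_sub]

lemma trFun_le_of_forall_le {f : ℝ → ℝ} {C : ℝ} (hC : 0 ≤ C)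
    (h : ∀ i, f (hM.eigenvalues i) ≤ C) : trFun hM f ≤ C := by
  rcases Nat.eq_zero_or_pos s with rfl | hs
  · simpa [trFun] using hC
  calc trFun hM f ≤ (s : ℝ)⁻¹ * ∑ _i : Fin s, C :=
        mul_le_mul_of_nonneg_left (Finset.sum_le_sum fun i _ => h i) (by positivity)
    _ = C := by simp [field]

lemma trFun_le_sSup_image_max_zero {K : Set ℝ} (hK : IsCompact K) (hK₀ : K.Nonempty)
    {f : ℝ → ℝ} (hf : ContinuousOn f K) (hMK : ∀ i, hM.eigenvalues i ∈ K) :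
    trFun hM f ≤ sSup ((fun x => max (f x) 0) '' K) := by
  have hbdd : BddAbove ((fun x => max (f x) 0) '' K) :=
    (hK.image_of_continuousOn (hf.sup continuousOn_const)).bddAbove
  obtain ⟨x₀, hx₀⟩ := hK₀
  refine trFun_le_of_forall_le hM ((le_max_right _ _).trans (le_csSup hbdd ⟨x₀, hx₀, rfl⟩))
    fun i => (le_max_left _ _).trans (le_csSup hbdd ⟨_, hMK i, rfl⟩)

lemma schattenNorm_nonneg (p : ℝ) : 0 ≤ schattenNorm p hM := by
  unfold schattenNorm
  positivity

lemma schattenNorm_natCast_pow {p : ℕ} (hp : p ≠ 0) :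
    schattenNorm p hM ^ p = trFun hM (fun x => |x| ^ p) := by
  have hsum : 0 ≤ (s : ℝ)⁻¹ * ∑ i, |hM.eigenvalues i| ^ (p : ℝ) := by positivity
  rw [schattenNorm, ← Real.rpow_natCast, ← Real.rpow_mul hsum, one_div,
    inv_mul_cancel₀ (by exact_mod_cast hp), Real.rpow_one, trFun]
  simp only [Real.rpow_natCast]

end NormalizedTrace

section DistanceToPSDCone

variable {s p : ℕ} {M : Matrix (Fin s) (Fin s) ℂ} (hM : M.IsHermitian)

lemma trFun_negPart_le_trFun_abs_pow_sub (hp : p ≠ 0) {N : Matrix (Fin s) (Fin s) ℂ}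
    (hN : N.PosSemidef) :
    trFun hM (_root_.negPart p) ≤ trFun (hM.sub hN.isHermitian) (fun x => |x| ^ p) := by
  refine mul_le_mul_of_nonneg_left ?_ (by positivity)
  calc ∑ i, _root_.negPart p (hM.eigenvalues i)
      ≤ ∑ i, _root_.negPart p ((hM.sub hN.isHermitian).eigenvalues i) :=
        (hM.sub hN.isHermitian).sum_eigenvalues_le_of_sub_posSemidef hM
          (by rwa [sub_sub_cancel]) (convexOn_negPart hp) (antitone_negPart hp)
    _ ≤ ∑ i, |(hM.sub hN.isHermitian).eigenvalues i| ^ p :=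
        Finset.sum_le_sum fun i _ => negPart_le_abs_pow p _

open scoped MatrixOrder in
lemma exists_posSemidef_trFun_abs_pow_sub_eq (hp : p ≠ 0) :
    ∃ (N : Matrix (Fin s) (Fin s) ℂ) (hN : N.PosSemidef),
      trFun (hM.sub hN.isHermitian) (fun x => |x| ^ p) = trFun hM (_root_.negPart p) := by
  have hN : (cfc (fun x : ℝ => max x 0) M).PosSemidef :=
    nonneg_iff_posSemidef.mp (cfc_nonneg fun x _ => le_max_right x 0)
  have hMN : M - cfc (fun x : ℝ => max x 0) M = cfc (fun x : ℝ => x - max x 0) M := by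
    rw [cfc_sub (fun x : ℝ => x) (fun x : ℝ => max x 0) M, cfc_id' ℝ M hM.isSelfAdjoint]
  refine ⟨_, hN, ?_⟩
  unfold trFun
  rw [hM.sum_eigenvalues_of_eq_cfc (hM.sub hN.isHermitian) hMN (fun x => |x| ^ p)]
  congr 1
  refine Finset.sum_congr rfl fun i _ => ?_
  rw [negPart_eq_max_neg_pow hp]
  rcases le_total (hM.eigenvalues i) 0 with h | h
  · rw [max_eq_right h, max_eq_left (neg_nonneg.mpr h), sub_zero, abs_of_nonpos h]
  · rw [max_eq_left h, max_eq_right (neg_nonpos.mpr h), sub_self, abs_zero]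

theorem distPSD_pow_eq_trFun_negPart (hp : p ≠ 0) :
    distPSD p hM ^ p = trFun hM (_root_.negPart p) := by
  obtain ⟨N₀, hN₀, hN₀_eq⟩ := exists_posSemidef_trFun_abs_pow_sub_eq hM hp
  have hleast : IsLeast {r | ∃ (N : Matrix (Fin s) (Fin s) ℂ) (hN : N.PosSemidef),
      r = schattenNorm p (hM.sub hN.isHermitian)} (schattenNorm p (hM.sub hN₀.isHermitian)) := by
    refine ⟨⟨N₀, hN₀, rfl⟩, ?_⟩
    rintro _ ⟨N, hN, rfl⟩
    refine (pow_le_pow_iff_left₀ (schattenNorm_nonneg _ _) (schattenNorm_nonneg _ _) hp).mp ?_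
    rw [schattenNorm_natCast_pow _ hp, schattenNorm_natCast_pow _ hp, hN₀_eq]
    exact trFun_negPart_le_trFun_abs_pow_sub hM hp hN
  rw [distPSD, hleast.csInf_eq, schattenNorm_natCast_pow _ hp, hN₀_eq]

end DistanceToPSDCone

/-- for any polynomial `q`,
`tr(q(M)) - ‖(q-f_p)₊‖_∞ ≤ d_p(M)^p ≤ tr(q(M)) + ‖(q-f_p)₋‖_∞`. -/
theorem statement2 (s : ℕ) (p : ℕ) (hp : 1 ≤ p) (M : Matrix (Fin s) (Fin s) ℂ)
    (hM : M.IsHermitian) (hnorm : ∀ i, |hM.eigenvalues i| ≤ 1) (q : Polynomial ℝ) :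
    trFun hM (fun x => q.eval x) -
        sSup ((fun x => max (q.eval x - negPart p x) 0) '' Set.Icc (-1 : ℝ) 1)
      ≤ distPSD (p : ℝ) hM ^ p ∧
    distPSD (p : ℝ) hM ^ p
      ≤ trFun hM (fun x => q.eval x) +
        sSup ((fun x => max (negPart p x - q.eval x) 0) '' Set.Icc (-1 : ℝ) 1) := by
  have hp' : p ≠ 0 := by omega
  have hspec (i : Fin s) : hM.eigenvalues i ∈ Set.Icc (-1 : ℝ) 1 := abs_le.mp (hnorm i)
  have hq : Continuous fun x => q.eval x := q.continuous
  have hneg := continuous_negPart_of_ne_zero hp'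
  have hqf := trFun_le_sSup_image_max_zero hM isCompact_Icc ⟨0, by norm_num⟩
    (f := fun x => q.eval x - _root_.negPart p x) (hq.sub hneg).continuousOn hspec
  have hfq := trFun_le_sSup_image_max_zero hM isCompact_Icc ⟨0, by norm_num⟩
    (f := fun x => _root_.negPart p x - q.eval x) (hneg.sub hq).continuousOn hspec
  rw [trFun_sub] at hqf hfq
  rw [distPSD_pow_eq_trFun_negPart hM hp']
  constructor <;> linarith

end
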